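/- Let Φ be a random variable uniformly distributed on the additive circle AddCircle (2π). For any fixed elements x₁, x₂, y₁, y₂ ∈ AddCircle (2π) with x₁ + x₂ = y₁ + y₂, the joint law of the pair (x₁ + Φ, x₂ − Φ) equals the joint law of the pair (y₁ + Φ, y₂ − Φ). In other words, the distribution of the pair of oppositely-masked symbols depends only on the sum x₁ + x₂. -/
import Mathlib


open MeasureTheory ProbabilityTheory Real

instance : Fact (0 < 2 * π) := ⟨by positivity⟩

/-- The normalized Haar (uniform) probability measure on the additive circle
`AddCircle (2 * π)` of angles modulo `2π`. -/
noncomputable def uniformAddCircle : Measure (AddCircle (2 * π)) :=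
  (ENNReal.ofReal (2 * π))⁻¹ • volume

/-- **Privacy of the aggregate (two-client case of the paper's Theorem 3, Condition I).**
If `Φ` is uniformly distributed on `AddCircle (2π)`, then for fixed symbols
`x₁, x₂, y₁, y₂` with `x₁ + x₂ = y₁ + y₂`, the joint law of the oppositely-masked pair
`(x₁ + Φ, x₂ - Φ)` equals that of `(y₁ + Φ, y₂ - Φ)`: the observed pair reveals
nothing beyond the sum `x₁ + x₂`. -/
theorem masked_pair_law_depends_only_on_sum
    {Ω : Type*} [MeasurableSpace Ω] {μ : Measure Ω} [IsProbabilityMeasure μ]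
    (Φ : Ω → AddCircle (2 * π)) (hΦ : Measurable Φ)
    (hΦunif : Measure.map Φ μ = uniformAddCircle)
    (x₁ x₂ y₁ y₂ : AddCircle (2 * π)) (hsum : x₁ + x₂ = y₁ + y₂) :
    Measure.map (fun ω => (x₁ + Φ ω, x₂ - Φ ω)) μ
      = Measure.map (fun ω => (y₁ + Φ ω, y₂ - Φ ω)) μ := by
  have hx₂ : x₂ - (y₁ - x₁) = y₂ := by
    calc x₂ - (y₁ - x₁) = (x₁ + x₂) - y₁ := by abel
      _ = (y₁ + y₂) - y₁ := by rw [hsum]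
      _ = y₂ := by abel
  have hf : Measurable (fun p : AddCircle (2 * π) => (x₁ + p, x₂ - p)) :=
    (measurable_const_add x₁).prodMk (measurable_const.sub measurable_id)
  have key : Measure.map (fun p : AddCircle (2 * π) => (y₁ - x₁) + p) uniformAddCircle
      = uniformAddCircle := by
    unfold uniformAddCircle
    rw [Measure.map_smul, (measurePreserving_add_left volume (y₁ - x₁)).map_eq]
  have h1 : (fun ω => (x₁ + Φ ω, x₂ - Φ ω))
      = (fun p : AddCircle (2 * π) => (x₁ + p, x₂ - p)) ∘ Φ := rfl
  have h2 : (fun ω => (y₁ + Φ ω, y₂ - Φ ω))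
      = ((fun p : AddCircle (2 * π) => (x₁ + p, x₂ - p)) ∘
          (fun p => (y₁ - x₁) + p)) ∘ Φ := by
    funext ω
    have e1 : y₁ + Φ ω = x₁ + ((y₁ - x₁) + Φ ω) := by abel
    have e2 : y₂ - Φ ω = x₂ - ((y₁ - x₁) + Φ ω) := by rw [← hx₂]; abel
    simp only [Function.comp_apply, e1, e2]
  rw [h1, h2, ← Measure.map_map hf hΦ, hΦunif,
    ← Measure.map_map (hf.comp (measurable_const_add (y₁ - x₁))) hΦ, hΦunif,
    ← Measure.map_map hf (measurable_const_add (y₁ - x₁)), key]
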